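/- arXiv:2508.14147 — 2 statements merged into one kernel-verified Lean document; each statement's English description precedes it below -/
import Mathlib

section
/- Let G be a temporal graph, k ≥ 1 an integer, ts a start time, and e a temporal edge such that the core time te = CT_ts(e) exists. If either CT_{ts+1}(e) does not exist or CT_{ts+1}(e) ≠ CT_ts(e), then [ts, te] is a minimal core window of e. -/
variable {V : Type*} [Fintype V]

/-- A vertex set `S` is `k`-dense in `G` if every vertex of `S` has
at least `k` neighbors of `G` lying in `S`. -/
def KDense (G : SimpleGraph V) (k : ℕ) (S : Set V) : Prop :=
  ∀ v ∈ S, k ≤ (S ∩ G.neighborSet v).ncard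

/-- The `k`-core of `G`: the union of all `k`-dense vertex sets. -/
def kCore (G : SimpleGraph V) (k : ℕ) : Set V :=
  ⋃₀ {S | KDense G k S}

/-- A temporal graph on a vertex set `V`: a finite set of temporal edges
`(u, v, t)` with `u ≠ v` and integer timestamp `t`. -/
structure TemporalGraph (V : Type*) where
  E : Finset (V × V × ℤ)
  ne : ∀ e ∈ E, e.1 ≠ e.2.1

/-- The projected (snapshot) graph of `G` over the time window `[ts, te]`. -/
def TemporalGraph.proj (G : TemporalGraph V) (ts te : ℤ) : SimpleGraph V where
  Adj u v := ∃ t, ts ≤ t ∧ t ≤ te ∧ ((u, v, t) ∈ G.E ∨ (v, u, t) ∈ G.E)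
  symm := by
    constructor
    rintro u v ⟨t, h1, h2, h3⟩
    exact ⟨t, h1, h2, h3.symm⟩
  loopless := by
    constructor
    rintro u ⟨t, h1, h2, h3⟩
    rcases h3 with h | h <;> exact G.ne _ h rfl

/-- The temporal `k`-core of the window `[ts, te]`: all temporal edges with
timestamp in `[ts, te]` whose both endpoints lie in the `k`-core of the
projected graph `G_[ts,te]`. -/
def TemporalGraph.tCore (G : TemporalGraph V) (k : ℕ) (ts te : ℤ) :
    Set (V × V × ℤ) :=
  {e | e ∈ G.E ∧ ts ≤ e.2.2 ∧ e.2.2 ≤ te ∧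
    e.1 ∈ kCore (G.proj ts te) k ∧ e.2.1 ∈ kCore (G.proj ts te) k}

/-- `[t1, t2]` is a minimal core window of the temporal edge `e`:
`e` lies in the temporal `k`-core of `[t1, t2]` but in no temporal `k`-core
of a window properly contained in `[t1, t2]`. -/
def MinCoreWindow (G : TemporalGraph V) (k : ℕ) (e : V × V × ℤ)
    (t1 t2 : ℤ) : Prop :=
  e ∈ G.tCore k t1 t2 ∧
  ∀ ts' te', t1 ≤ ts' → te' ≤ t2 → (ts', te') ≠ (t1, t2) →
    e ∉ G.tCore k ts' te'

/-! The projected graph, hence the `k`-core and the temporal `k`-core, grow with the window.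
So if `e` lay in the core of a proper subwindow `[ts', te']` of `[ts, te]`, either `te' < te`,
contradicting the minimality of `te = CT_ts(e)`, or `te' = te` and `ts < ts'`; then
`e ∈ C_[ts+1, te]`, and as `C_[ts+1, x] ⊆ C_[ts, x]` no earlier end time works, so
`CT_{ts+1}(e) = te`. -/

lemma kCore_mono {G G' : SimpleGraph V} (hle : G ≤ G') (k : ℕ) : kCore G k ⊆ kCore G' k := by
  rintro v ⟨S, hS, hvS⟩
  refine ⟨S, fun w hw => (hS w hw).trans ?_, hvS⟩
  exact Set.ncard_le_ncard (Set.inter_subset_inter_right _ fun _ hx => hle hx) (Set.toFinite _)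

namespace TemporalGraph

lemma proj_mono {V : Type*} (G : TemporalGraph V) {ts te ts' te' : ℤ} (hs : ts ≤ ts')
    (he : te' ≤ te) : G.proj ts' te' ≤ G.proj ts te := by
  rintro u v ⟨t, hst, hte, hE⟩
  exact ⟨t, hs.trans hst, hte.trans he, hE⟩

lemma tCore_mono (G : TemporalGraph V) (k : ℕ) {ts te ts' te' : ℤ} (hs : ts ≤ ts')
    (he : te' ≤ te) : G.tCore k ts' te' ⊆ G.tCore k ts te := by
  rintro e ⟨hE, hst, hte, h₁, h₂⟩
  exact ⟨hE, hs.trans hst, hte.trans he, kCore_mono (G.proj_mono hs he) k h₁,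
    kCore_mono (G.proj_mono hs he) k h₂⟩

lemma isLeast_coreTime_succ {G : TemporalGraph V} {k : ℕ} {e : V × V × ℤ} {ts te : ℤ}
    (h : IsLeast {x | e ∈ G.tCore k ts x} te) (hmem : e ∈ G.tCore k (ts + 1) te) :
    IsLeast {x | e ∈ G.tCore k (ts + 1) x} te :=
  ⟨hmem, fun _ hx => h.2 (G.tCore_mono k (Int.le_add_one le_rfl) le_rfl hx)⟩

end TemporalGraph

theorem minCoreWindow_of_core_time_change_general (G : TemporalGraph V) (k : ℕ)
    (e : V × V × ℤ) (ts te : ℤ)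
    (h : IsLeast {x : ℤ | e ∈ G.tCore k ts x} te)
    (hne : ∀ te', IsLeast {x : ℤ | e ∈ G.tCore k (ts + 1) x} te' → te' ≠ te) :
    MinCoreWindow G k e ts te := by
  refine ⟨h.1, fun ts' te' hts hte hproper hmem => ?_⟩
  rcases hte.lt_or_eq with hlt | rfl
  · exact (h.2 (G.tCore_mono k hts le_rfl hmem)).not_gt hlt
  · have hsucc : ts + 1 ≤ ts' := by
      rcases hts.lt_or_eq with hlt | rfl
      · exact hlt
      · exact absurd rfl hproper
    exact hne te' (TemporalGraph.isLeast_coreTime_succ h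
      (G.tCore_mono k hsucc le_rfl hmem)) rfl

theorem minCoreWindow_of_core_time_change (G : TemporalGraph V) (k : ℕ)
    (hk : 1 ≤ k) (e : V × V × ℤ) (ts te : ℤ)
    (h : IsLeast {x : ℤ | e ∈ G.tCore k ts x} te)
    (hne : ∀ te', IsLeast {x : ℤ | e ∈ G.tCore k (ts + 1) x} te' → te' ≠ te) :
    MinCoreWindow G k e ts te :=
  minCoreWindow_of_core_time_change_general G k e ts te h hne
end

section
/- Let G be a temporal graph, k ≥ 1 an integer, and ts a timestamp. There exists a window [a,b] such that C_[a,b] is nonempty and the tightest time interval TTI(C_[a,b]) has start time ts if and only if some temporal edge of G has a minimal core window whose start time is ts. -/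
variable {V : Type*} [Fintype V]

/-- `[a, b]` is the tightest time interval of the edge set `C`:
`a` and `b` are the minimum and maximum timestamps of the edges in `C`. -/
def IsTTI (C : Set (V × V × ℤ)) (a b : ℤ) : Prop :=
  IsLeast {t | ∃ e ∈ C, e.2.2 = t} a ∧ IsGreatest {t | ∃ e ∈ C, e.2.2 = t} b

/-!
Shrinking a window `[a, b]` to the tightest time interval `[tmin, tmax]` of its temporal
`k`-core does not change the core: every edge of `G_[a,b]` between two vertices of its `k`-core
is witnessed by a core edge, whose timestamp lies in `[tmin, tmax]`, so that `k`-core is still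
`k`-dense in `G_[tmin,tmax]`. In particular a minimal core window `[ts, t2]` is the tightest time
interval of its own core. Conversely, if `[ts, te]` is the tightest time interval of a core, some
edge with timestamp `ts` lies in the core of `[ts, te]`, and `[ts, t2]` with `t2` the least end
time keeping it in a core is a minimal core window of that edge.
-/

section

variable {V : Type*}

lemma subset_kCore {G : SimpleGraph V} {k : ℕ} {S : Set V} (h : KDense G k S) :
    S ⊆ kCore G k :=
  fun _ hv => ⟨S, h, hv⟩

namespace TemporalGraph

variable {G : TemporalGraph V} {k : ℕ} {a b c d : ℤ}

lemma proj_anti (hac : a ≤ c) (hdb : d ≤ b) : G.proj c d ≤ G.proj a b := by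
  rintro u v ⟨t, hct, htd, huv⟩
  exact ⟨t, hac.trans hct, htd.trans hdb, huv⟩

lemma exists_isTTI_tCore (hne : (G.tCore k a b).Nonempty) :
    ∃ tmin tmax, IsTTI (G.tCore k a b) tmin tmax := by
  have hts : {t | ∃ e ∈ G.tCore k a b, e.2.2 = t}.Nonempty :=
    let ⟨e, he⟩ := hne; ⟨e.2.2, e, he, rfl⟩
  obtain ⟨tmin, hmin⟩ := BddBelow.exists_isLeast_of_nonempty
    ⟨a, by rintro _ ⟨e, he, rfl⟩; exact he.2.1⟩ hts
  obtain ⟨tmax, hmax⟩ := BddAbove.exists_isGreatest_of_nonempty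
    ⟨b, by rintro _ ⟨e, he, rfl⟩; exact he.2.2.1⟩ hts
  exact ⟨tmin, tmax, hmin, hmax⟩

lemma le_and_le_of_isTTI_tCore (h : IsTTI (G.tCore k a b) c d) : a ≤ c ∧ d ≤ b := by
  obtain ⟨⟨e, he, rfl⟩, -⟩ := h.1
  obtain ⟨⟨f, hf, rfl⟩, -⟩ := h.2
  exact ⟨he.2.1, hf.2.2.1⟩

end TemporalGraph

lemma exists_minCoreWindow_of_mem_tCore {G : TemporalGraph V} {k : ℕ} {e : V × V × ℤ} {b : ℤ}
    (he : e ∈ G.tCore k e.2.2 b) : ∃ t2, MinCoreWindow G k e e.2.2 t2 := by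
  obtain ⟨t2, ht2, hleast⟩ := BddBelow.exists_isLeast_of_nonempty
    (S := {t | e ∈ G.tCore k e.2.2 t}) ⟨e.2.2, fun _ ht => ht.2.2.1⟩ ⟨b, he⟩
  refine ⟨t2, ht2, fun ts' te' h1 h2 hne he' => hne ?_⟩
  obtain rfl : ts' = e.2.2 := le_antisymm he'.2.1 h1
  exact Prod.ext rfl (le_antisymm h2 (hleast he'))

end

section KCore

variable {G H : SimpleGraph V} {k : ℕ}

lemma kDense_kCore : KDense G k (kCore G k) := by
  rintro v ⟨S, hS, hvS⟩
  exact (hS v hvS).trans <| Set.ncard_le_ncard <|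
    Set.inter_subset_inter_left _ (subset_kCore hS)

lemma kCore_mono_s11 (h : H ≤ G) : kCore H k ⊆ kCore G k := by
  refine subset_kCore fun v hv => (kDense_kCore v hv).trans <| Set.ncard_le_ncard ?_
  exact Set.inter_subset_inter_right _ fun _ hw => h hw

end KCore

namespace TemporalGraph

variable {G : TemporalGraph V} {k : ℕ} {a b c d : ℤ}

lemma tCore_anti (hac : a ≤ c) (hdb : d ≤ b) : G.tCore k c d ⊆ G.tCore k a b := by
  rintro e ⟨heE, hct, htd, hu, hv⟩
  exact ⟨heE, hac.trans hct, htd.trans hdb, kCore_mono_s11 (proj_anti hac hdb) hu,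
    kCore_mono_s11 (proj_anti hac hdb) hv⟩

lemma kCore_proj_subset_of_tCore (hcd : ∀ e ∈ G.tCore k a b, c ≤ e.2.2 ∧ e.2.2 ≤ d) :
    kCore (G.proj a b) k ⊆ kCore (G.proj c d) k := by
  refine subset_kCore fun v hv => (kDense_kCore v hv).trans <| Set.ncard_le_ncard ?_
  rintro w ⟨hw, t, hat, htb, hvw | hwv⟩
  · obtain ⟨hct, htd⟩ := hcd (v, w, t) ⟨hvw, hat, htb, hv, hw⟩
    exact ⟨hw, t, hct, htd, .inl hvw⟩
  · obtain ⟨hct, htd⟩ := hcd (w, v, t) ⟨hwv, hat, htb, hw, hv⟩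
    exact ⟨hw, t, hct, htd, .inr hwv⟩

lemma tCore_eq_of_isTTI (h : IsTTI (G.tCore k a b) c d) :
    G.tCore k a b = G.tCore k c d := by
  obtain ⟨hac, hdb⟩ := le_and_le_of_isTTI_tCore h
  have hcd : ∀ e ∈ G.tCore k a b, c ≤ e.2.2 ∧ e.2.2 ≤ d :=
    fun e he => ⟨h.1.2 ⟨e, he, rfl⟩, h.2.2 ⟨e, he, rfl⟩⟩
  refine Set.Subset.antisymm (fun e he => ?_) (tCore_anti hac hdb)
  obtain ⟨hce, hed⟩ := hcd e he
  obtain ⟨heE, -, -, hu, hv⟩ := he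
  exact ⟨heE, hce, hed, kCore_proj_subset_of_tCore hcd hu, kCore_proj_subset_of_tCore hcd hv⟩

end TemporalGraph

open TemporalGraph

lemma MinCoreWindow.isTTI {G : TemporalGraph V} {k : ℕ} {e : V × V × ℤ} {t1 t2 : ℤ}
    (h : MinCoreWindow G k e t1 t2) : IsTTI (G.tCore k t1 t2) t1 t2 := by
  obtain ⟨tmin, tmax, hTTI⟩ := exists_isTTI_tCore ⟨e, h.1⟩
  obtain ⟨h1, h2⟩ := le_and_le_of_isTTI_tCore hTTI
  have heq : (tmin, tmax) = (t1, t2) := by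
    by_contra hne
    exact h.2 tmin tmax h1 h2 hne (tCore_eq_of_isTTI hTTI ▸ h.1)
  obtain ⟨rfl, rfl⟩ := Prod.ext_iff.mp heq
  exact hTTI

theorem valid_start_time_iff_general (G : TemporalGraph V) (k : ℕ)
    (ts : ℤ) :
    (∃ a b te', (G.tCore k a b).Nonempty ∧ IsTTI (G.tCore k a b) ts te') ↔
    (∃ (e : V × V × ℤ) (t2 : ℤ), MinCoreWindow G k e ts t2) := by
  constructor
  · rintro ⟨a, b, te', -, hTTI⟩
    obtain ⟨e, he, rfl⟩ := hTTI.1.1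
    rw [tCore_eq_of_isTTI hTTI] at he
    obtain ⟨t2, h⟩ := exists_minCoreWindow_of_mem_tCore he
    exact ⟨e, t2, h⟩
  · rintro ⟨e, t2, h⟩
    exact ⟨ts, t2, t2, ⟨e, h.1⟩, h.isTTI⟩

theorem valid_start_time_iff (G : TemporalGraph V) (k : ℕ) (hk : 1 ≤ k)
    (ts : ℤ) :
    (∃ a b te', (G.tCore k a b).Nonempty ∧ IsTTI (G.tCore k a b) ts te') ↔
    (∃ (e : V × V × ℤ) (t2 : ℤ), MinCoreWindow G k e ts t2) :=
  valid_start_time_iff_general G k ts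
end
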